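/- arXiv:0802.1886 — 6 statements merged into one kernel-verified Lean document; each statement's English description precedes it below -/
import Mathlib

section
/- Let K be a CM-field of degree 2g that is Galois over ℚ with cyclic Galois group generated by σ. Let ξ ∈ K and set π = ∏_{i=1}^{g} σ^i(ξ). Then π · σ^g(π) = N_{K/ℚ}(ξ), and for every field embedding φ : K → ℂ one has |φ(π)|² = N_{K/ℚ}(ξ). In particular, if ξ is an algebraic integer and N_{K/ℚ}(ξ) = q is a prime number, then π is an algebraic integer all of whose complex embeddings have absolute value √q (a q-Weil number in K). -/
/-- A number field is totally complex if no embedding into `ℂ` has image contained in `ℝ`. -/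
def IsTotallyComplexField (K : Type*) [Field K] : Prop :=
  ∀ φ : K →+* ℂ, ∃ x : K, (φ x).im ≠ 0

/-- A CM-field: a totally complex field that is a degree-2 extension of a totally real
subfield (a subfield all of whose complex embeddings have image in `ℝ`). -/
def IsCMField (K : Type*) [Field K] : Prop :=
  IsTotallyComplexField K ∧
    ∃ F : Subfield K, (∀ φ : F →+* ℂ, ∀ x : F, (φ x).im = 0) ∧ Module.finrank F K = 2


/-
Since `σ` generates `Gal(K/ℚ)` and has order `2g`, the norm of `ξ` is `∏_{i<2g} σ^i(ξ)`, and
`π · σ^g(π) = σ(∏_{i<2g} σ^i(ξ))` is that norm. For an embedding `φ`, complex conjugation on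
`φ(K)` is induced by an automorphism of order `2` (nontrivial because `K` is totally complex),
and the only element of order `2` in a cyclic group of order `2g` is `σ^g`; hence
`|φ(π)|² = φ(π) · φ(σ^g(π)) = N(ξ)`.
-/

open NumberField.ComplexEmbedding Finset

theorem Int.two_mul_dvd_sub_of_two_mul_dvd_two_mul {g k : ℤ} (h : 2 * g ∣ 2 * k)
    (h' : ¬ 2 * g ∣ k) : 2 * g ∣ g - k := by
  obtain ⟨t, rfl⟩ : g ∣ k := (mul_dvd_mul_iff_left two_ne_zero).mp h
  rcases t.even_or_odd' with ⟨s, rfl | rfl⟩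
  · exact absurd ⟨s, by ring⟩ h'
  · exact ⟨-s, by ring⟩

section CyclicGroup

variable {G : Type*} [Group G]

theorem Fintype.prod_eq_prod_range_orderOf {M : Type*} [CommMonoid M] [Fintype G] {σ : G}
    (hσ : ∀ τ : G, τ ∈ Subgroup.zpowers σ) (f : G → M) :
    ∏ τ, f τ = ∏ i ∈ range (orderOf σ), f (σ ^ i) := by
  classical
  rw [← IsCyclic.image_range_orderOf hσ, prod_image]
  intro i hi j hj hij
  exact pow_injOn_Iio_orderOf (by simpa using hi) (by simpa using hj) hij

theorem eq_pow_of_orderOf_eq_two {σ τ : G} {g : ℕ} (hτ : τ ∈ Subgroup.zpowers σ)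
    (hσ : orderOf σ = 2 * g) (hτ₂ : orderOf τ = 2) : τ = σ ^ g := by
  obtain ⟨k, rfl⟩ := hτ
  have hdvd (n : ℤ) : (2 * g : ℤ) ∣ n ↔ σ ^ n = 1 := by
    rw [← orderOf_dvd_iff_zpow_eq_one, hσ, Nat.cast_mul, Nat.cast_ofNat]
  have hsq : (2 * g : ℤ) ∣ 2 * k := by
    rw [hdvd, mul_comm, zpow_mul, zpow_ofNat, ← hτ₂, pow_orderOf_eq_one]
  have hne : ¬ (2 * g : ℤ) ∣ k := by
    rw [hdvd]
    intro h
    simp [h] at hτ₂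
  rw [← zpow_natCast, zpow_eq_zpow_iff_modEq, hσ, Int.modEq_iff_dvd]
  exact_mod_cast Int.two_mul_dvd_sub_of_two_mul_dvd_two_mul hsq hne

end CyclicGroup

section Automorphism

variable {R A : Type*} [CommSemiring R] [CommSemiring A] [Algebra R A]

theorem AlgEquiv.prod_Icc_one_pow_apply (σ : A ≃ₐ[R] A) (x : A) (n : ℕ) :
    ∏ i ∈ Icc 1 n, (σ ^ i) x = σ (∏ i ∈ range n, (σ ^ i) x) := by
  rw [map_prod, ← Ico_add_one_right_eq_Icc, prod_Ico_eq_prod_range, Nat.add_sub_cancel]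
  simp only [add_comm 1, pow_succ', AlgEquiv.mul_apply]

theorem AlgEquiv.prod_Icc_one_pow_apply_mul_pow_apply (σ : A ≃ₐ[R] A) (x : A) (g : ℕ) :
    (∏ i ∈ Icc 1 g, (σ ^ i) x) * (σ ^ g) (∏ i ∈ Icc 1 g, (σ ^ i) x) =
      σ (∏ i ∈ range (2 * g), (σ ^ i) x) := by
  rw [two_mul, prod_range_add, map_mul, prod_Icc_one_pow_apply]
  congr 1
  rw [← AlgEquiv.mul_apply, ← pow_succ, pow_succ', AlgEquiv.mul_apply, map_prod]
  simp only [← AlgEquiv.mul_apply, ← pow_add]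

end Automorphism

section Galois

variable {F K : Type*} [Field F] [Field K] [Algebra F K] [FiniteDimensional F K] [IsGalois F K]

theorem algebraMap_norm_eq_prod_range_orderOf {σ : Gal(K/F)}
    (hσ : ∀ τ : Gal(K/F), τ ∈ Subgroup.zpowers σ) (x : K) :
    algebraMap F K (Algebra.norm F x) = ∏ i ∈ range (orderOf σ), (σ ^ i) x := by
  rw [Algebra.norm_eq_prod_automorphisms, Fintype.prod_eq_prod_range_orderOf hσ]

theorem prod_Icc_one_pow_apply_mul_pow_apply_eq_norm {σ : Gal(K/F)}
    (hσ : ∀ τ : Gal(K/F), τ ∈ Subgroup.zpowers σ) {g : ℕ} (hord : orderOf σ = 2 * g) (x : K) :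
    (∏ i ∈ Icc 1 g, (σ ^ i) x) * (σ ^ g) (∏ i ∈ Icc 1 g, (σ ^ i) x) =
      algebraMap F K (Algebra.norm F x) := by
  rw [AlgEquiv.prod_Icc_one_pow_apply_mul_pow_apply, ← hord,
    ← algebraMap_norm_eq_prod_range_orderOf hσ, AlgEquiv.commutes]

end Galois

namespace NumberField.ComplexEmbedding

variable {k K : Type*} [Field k] [Field K] [Algebra k K]

theorem exists_isConj_of_isReal_comp [IsGalois k K] {φ : K →+* ℂ}
    (hφ : IsReal (φ.comp (algebraMap k K))) : ∃ τ : Gal(K/k), IsConj φ τ := by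
  obtain ⟨τ, hτ⟩ := exists_comp_symm_eq_of_comp_eq φ (conjugate φ) (isReal_iff.mp hφ).symm
  exact ⟨τ.symm, hτ.symm⟩

theorem IsConj.sq_norm_apply {φ : K →+* ℂ} {τ : Gal(K/k)} (hτ : IsConj φ τ) (x : K) :
    (‖φ x‖ ^ 2 : ℂ) = φ (x * τ x) := by
  rw [map_mul, hτ.eq, ← Complex.mul_conj']
  rfl

end NumberField.ComplexEmbedding

theorem IsTotallyComplexField.not_isReal {K : Type*} [Field K] (hK : IsTotallyComplexField K)
    (φ : K →+* ℂ) : ¬ IsReal φ := fun hφ ↦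
  have ⟨x, hx⟩ := hK φ
  hx (Complex.conj_eq_iff_im.mp (RingHom.congr_fun (isReal_iff.mp hφ) x))

theorem isConj_pow_of_not_isReal {K : Type*} [Field K] [CharZero K] [IsGalois ℚ K]
    {σ : Gal(K/ℚ)} (hσ : ∀ τ : Gal(K/ℚ), τ ∈ Subgroup.zpowers σ) {g : ℕ}
    (hord : orderOf σ = 2 * g) {φ : K →+* ℂ} (hφ : ¬ IsReal φ) : IsConj φ (σ ^ g) := by
  obtain ⟨τ, hτ⟩ := exists_isConj_of_isReal_comp (k := ℚ) (φ := φ)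
    (isReal_iff.mpr (Subsingleton.elim _ _))
  have hτ₂ : orderOf τ = 2 := orderOf_isConj_two_of_ne_one hτ ((isConj_ne_one_iff hτ).mpr hφ)
  rwa [← eq_pow_of_orderOf_eq_two (hσ τ) hord hτ₂]

theorem typeNorm_cyclic_weil_number_general
    (K : Type*) [Field K] [NumberField K] [IsGalois ℚ K] (g : ℕ)
    (hCM : IsCMField K)
    (σ : K ≃ₐ[ℚ] K) (hord : orderOf σ = 2 * g)
    (hcyc : ∀ τ : K ≃ₐ[ℚ] K, τ ∈ Subgroup.zpowers σ)
    (ξ : K) (π : K) (hπ : π = ∏ i ∈ Finset.Icc 1 g, (σ ^ i) ξ) :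
    π * (σ ^ g) π = algebraMap ℚ K (Algebra.norm ℚ ξ) ∧
    (∀ φ : K →+* ℂ, ‖φ π‖ ^ 2 = ((Algebra.norm ℚ ξ : ℚ) : ℝ)) ∧
    (IsIntegral ℤ ξ → ∀ q : ℕ, Nat.Prime q → Algebra.norm ℚ ξ = (q : ℚ) →
      IsIntegral ℤ π ∧ ∀ φ : K →+* ℂ, ‖φ π‖ = Real.sqrt q) := by
  have hnorm : π * (σ ^ g) π = algebraMap ℚ K (Algebra.norm ℚ ξ) :=
    hπ ▸ prod_Icc_one_pow_apply_mul_pow_apply_eq_norm hcyc hord ξ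
  have hsq (φ : K →+* ℂ) : ‖φ π‖ ^ 2 = ((Algebra.norm ℚ ξ : ℚ) : ℝ) := by
    have hconj := isConj_pow_of_not_isReal hcyc hord (hCM.1.not_isReal φ)
    apply Complex.ofReal_injective
    push_cast
    rw [hconj.sq_norm_apply, hnorm, eq_ratCast, map_ratCast]
  refine ⟨hnorm, hsq, fun hξ q _ hq ↦ ⟨?_, fun φ ↦ ?_⟩⟩
  · rw [hπ]
    exact IsIntegral.prod _ fun i _ ↦ hξ.map ((σ ^ i : K ≃ₐ[ℚ] K) : K →+* K).toIntAlgHom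
  · rw [← Real.sqrt_sq (norm_nonneg (φ π)), hsq, hq, Rat.cast_natCast]

/-- Let `K` be a CM-field of degree `2g`, Galois over `ℚ` with cyclic
Galois group generated by `σ`.  For `ξ ∈ K` put `π = ∏_{i=1}^{g} σ^i(ξ)`.  Then
`π ⬝ σ^g(π) = N_{K/ℚ}(ξ)`, every complex embedding `φ` satisfies
`|φ(π)|² = N_{K/ℚ}(ξ)`, and if `ξ` is an algebraic integer whose norm is a prime `q`,
then `π` is a `q`-Weil number: an algebraic integer all of whose complex embeddings
have absolute value `√q`. -/
theorem typeNorm_cyclic_weil_number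
    (K : Type*) [Field K] [NumberField K] [IsGalois ℚ K] (g : ℕ) (hg : 0 < g)
    (hdeg : Module.finrank ℚ K = 2 * g)
    (hCM : IsCMField K)
    (σ : K ≃ₐ[ℚ] K) (hord : orderOf σ = 2 * g)
    (hcyc : ∀ τ : K ≃ₐ[ℚ] K, τ ∈ Subgroup.zpowers σ)
    (ξ : K) (π : K) (hπ : π = ∏ i ∈ Finset.Icc 1 g, (σ ^ i) ξ) :
    π * (σ ^ g) π = algebraMap ℚ K (Algebra.norm ℚ ξ) ∧
    (∀ φ : K →+* ℂ, ‖φ π‖ ^ 2 = ((Algebra.norm ℚ ξ : ℚ) : ℝ)) ∧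
    (IsIntegral ℤ ξ → ∀ q : ℕ, Nat.Prime q → Algebra.norm ℚ ξ = (q : ℚ) →
      IsIntegral ℤ π ∧ ∀ φ : K →+* ℂ, ‖φ π‖ = Real.sqrt q) :=
  typeNorm_cyclic_weil_number_general K g hCM σ hord hcyc ξ π hπ
end

section
/- Let K ⊆ ℂ be a CM-field of degree 2g, let L ⊆ ℂ be the normal closure of K over ℚ, let G = Gal(L/ℚ), let c ∈ G be the restriction of complex conjugation to L, and let H = {γ ∈ G : γ(x) = x for all x ∈ K}. Let S ⊆ G satisfy S·H = S and let G be the disjoint union of S and cS. Define Ĥ = {γ ∈ G : γS = S} and K̂ = L^Ĥ. Let R ⊆ S be any set of representatives for the left cosets of H contained in S (so S is the disjoint union of ρH for ρ ∈ R). Then K̂ is generated over ℚ by the elements ∑_{ρ∈R} ρ(x) as x ranges over K. -/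
open scoped Pointwise

/-! Restricting automorphisms to `M` identifies the left cosets of its fixing group `H` with the
embeddings `M → E`, so a set `S` with `S H = S` and finitely many coset representatives `R` is
encoded by the finite set `Φ` of their restrictions, and `∑_{ρ ∈ R} ρ x = ∑_{φ ∈ Φ} φ x`.
An automorphism `γ` satisfies `γ S = S` iff `γ ∘ Φ = Φ`, and by linear independence of characters
this holds iff `γ` fixes every sum `∑_{φ ∈ Φ} φ x`. Hence the stabilizer of `S` is the fixing
group of the field generated by these sums, and Galois correspondence (which holds for infinite
Galois extensions as well) identifies that field with the fixed field of the stabilizer. -/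

open Finset

theorem LinearIndependent.finset_eq_of_sum_eq {ι R V : Type*} [Semiring R] [Nontrivial R]
    [AddCommMonoid V] [Module R V] {v : ι → V} (hv : LinearIndependent R v) {s t : Finset ι}
    (h : ∑ i ∈ s, v i = ∑ i ∈ t, v i) : s = t := by
  classical
  have key : ∀ u : Finset ι, Finsupp.linearCombination R v (∑ i ∈ u, Finsupp.single i 1) =
      ∑ i ∈ u, v i := fun u => by simp
  have hsingle := hv (show Finsupp.linearCombination R v (∑ i ∈ s, Finsupp.single i 1) =
    Finsupp.linearCombination R v (∑ i ∈ t, Finsupp.single i 1) by rw [key, key, h])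
  ext i
  have := DFunLike.congr_fun hsingle i
  simp only [Finsupp.finsetSum_apply, Finsupp.single_apply, Finset.sum_ite_eq'] at this
  by_cases hs : i ∈ s <;> by_cases ht : i ∈ t <;> simp_all

theorem AlgHom.finset_eq_of_sum_apply_eq {F A B : Type*} [CommSemiring F] [Semiring A]
    [Algebra F A] [CommRing B] [IsDomain B] [Algebra F B] {s t : Finset (A →ₐ[F] B)}
    (h : ∀ x, ∑ φ ∈ s, φ x = ∑ φ ∈ t, φ x) : s = t :=
  (linearIndependent_toLinearMap F A B).finset_eq_of_sum_eq
    (LinearMap.ext fun x => by simpa using h x)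

namespace IntermediateField

variable {F E : Type*} [Field F] [Field E] [Algebra F E] (M : IntermediateField F E)

def restrictAlgHom (σ : E ≃ₐ[F] E) : M →ₐ[F] E := (σ : E →ₐ[F] E).comp M.val

variable {M}

@[simp]
theorem restrictAlgHom_apply (σ : E ≃ₐ[F] E) (x : M) : M.restrictAlgHom σ x = σ x := rfl

theorem restrictAlgHom_mul (γ σ : E ≃ₐ[F] E) :
    M.restrictAlgHom (γ * σ) = (γ : E →ₐ[F] E).comp (M.restrictAlgHom σ) := rfl

theorem restrictAlgHom_eq_iff {σ τ : E ≃ₐ[F] E} :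
    M.restrictAlgHom σ = M.restrictAlgHom τ ↔ σ⁻¹ * τ ∈ M.fixingSubgroup := by
  simp only [AlgHom.ext_iff, Subtype.forall, restrictAlgHom_apply, mem_fixingSubgroup_iff,
    AlgEquiv.mul_apply, AlgEquiv.aut_inv, AlgEquiv.symm_apply_eq, eq_comm (a := σ _)]

theorem preimage_image_restrictAlgHom {T : Set (E ≃ₐ[F] E)} (hT : T * M.fixingSubgroup = T) :
    M.restrictAlgHom ⁻¹' (M.restrictAlgHom '' T) = T := by
  refine (Set.subset_preimage_image _ _).antisymm' ?_
  rintro σ ⟨τ, hτ, hτσ⟩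
  rw [← hT]
  exact ⟨τ, hτ, τ⁻¹ * σ, restrictAlgHom_eq_iff.mp hτσ, mul_inv_cancel_left τ σ⟩

theorem image_restrictAlgHom_smul (γ : E ≃ₐ[F] E) (T : Set (E ≃ₐ[F] E)) :
    M.restrictAlgHom '' (γ • T) = ((γ : E →ₐ[F] E).comp ·) '' (M.restrictAlgHom '' T) := by
  simp only [← Set.image_smul, Set.image_image, smul_eq_mul, restrictAlgHom_mul]

theorem smul_eq_self_iff_image_comp_eq {S : Set (E ≃ₐ[F] E)} (hS : S * M.fixingSubgroup = S)
    (γ : E ≃ₐ[F] E) :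
    γ • S = S ↔ ((γ : E →ₐ[F] E).comp ·) '' (M.restrictAlgHom '' S) = M.restrictAlgHom '' S := by
  rw [← image_restrictAlgHom_smul]
  refine ⟨fun h => by rw [h], fun h => ?_⟩
  have hγS : γ • S * M.fixingSubgroup = γ • S := by rw [smul_mul_assoc, hS]
  rw [← preimage_image_restrictAlgHom hγS, h, preimage_image_restrictAlgHom hS]

section CosetRepresentatives

open scoped Classical

variable {S : Set (E ≃ₐ[F] E)} {R : Finset (E ≃ₐ[F] E)}

theorem injOn_restrictAlgHom
    (hRsep : ∀ ρ ∈ R, ∀ ρ' ∈ R, ρ⁻¹ * ρ' ∈ M.fixingSubgroup → ρ = ρ') :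
    Set.InjOn M.restrictAlgHom R :=
  fun ρ hρ ρ' hρ' h => hRsep ρ hρ ρ' hρ' (restrictAlgHom_eq_iff.mp h)

theorem coe_image_restrictAlgHom (hRS : ↑R ⊆ S)
    (hRcover : ∀ s ∈ S, ∃ ρ ∈ R, ρ⁻¹ * s ∈ M.fixingSubgroup) :
    (R.image M.restrictAlgHom : Set (M →ₐ[F] E)) = M.restrictAlgHom '' S := by
  rw [coe_image]
  refine (Set.image_mono hRS).antisymm ?_
  rintro _ ⟨s, hs, rfl⟩
  obtain ⟨ρ, hρ, hρs⟩ := hRcover s hs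
  exact ⟨ρ, hρ, restrictAlgHom_eq_iff.mpr hρs⟩

theorem sum_apply_eq_sum_image_restrictAlgHom
    (hRsep : ∀ ρ ∈ R, ∀ ρ' ∈ R, ρ⁻¹ * ρ' ∈ M.fixingSubgroup → ρ = ρ') {x : E} (hx : x ∈ M) :
    ∑ ρ ∈ R, ρ x = ∑ φ ∈ R.image M.restrictAlgHom, φ ⟨x, hx⟩ := by
  rw [sum_image (injOn_restrictAlgHom hRsep)]
  rfl

theorem forall_map_sum_eq_iff
    (hRsep : ∀ ρ ∈ R, ∀ ρ' ∈ R, ρ⁻¹ * ρ' ∈ M.fixingSubgroup → ρ = ρ') (γ : E ≃ₐ[F] E) :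
    (∀ x ∈ M, γ (∑ ρ ∈ R, ρ x) = ∑ ρ ∈ R, ρ x) ↔
      (R.image M.restrictAlgHom).image ((γ : E →ₐ[F] E).comp ·) = R.image M.restrictAlgHom := by
  set Φ := R.image M.restrictAlgHom
  have hcomp : Function.Injective ((γ : E →ₐ[F] E).comp : (M →ₐ[F] E) → M →ₐ[F] E) :=
    fun φ ψ h => AlgHom.ext fun x => γ.injective (DFunLike.congr_fun h x)
  have hγ (x : M) : γ (∑ φ ∈ Φ, φ x) = ∑ φ ∈ Φ.image ((γ : E →ₐ[F] E).comp ·), φ x := by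
    rw [map_sum, sum_image hcomp.injOn]
    rfl
  refine ⟨fun h => AlgHom.finset_eq_of_sum_apply_eq fun x => ?_, fun h x hx => ?_⟩
  · rw [← hγ]
    simpa only [sum_apply_eq_sum_image_restrictAlgHom hRsep x.2] using h x x.2
  · rw [sum_apply_eq_sum_image_restrictAlgHom hRsep hx, hγ, h]

theorem smul_eq_self_iff_forall_map_sum_eq (hS : S * M.fixingSubgroup = S) (hRS : ↑R ⊆ S)
    (hRcover : ∀ s ∈ S, ∃ ρ ∈ R, ρ⁻¹ * s ∈ M.fixingSubgroup)
    (hRsep : ∀ ρ ∈ R, ∀ ρ' ∈ R, ρ⁻¹ * ρ' ∈ M.fixingSubgroup → ρ = ρ') (γ : E ≃ₐ[F] E) :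
    γ • S = S ↔ ∀ x ∈ M, γ (∑ ρ ∈ R, ρ x) = ∑ ρ ∈ R, ρ x := by
  rw [smul_eq_self_iff_image_comp_eq hS, forall_map_sum_eq_iff hRsep,
    ← coe_image_restrictAlgHom hRS hRcover, ← coe_image, coe_inj]

theorem fixedField_stabilizer_eq_adjoin [IsGalois F E] (hS : S * M.fixingSubgroup = S)
    (hRS : ↑R ⊆ S) (hRcover : ∀ s ∈ S, ∃ ρ ∈ R, ρ⁻¹ * s ∈ M.fixingSubgroup)
    (hRsep : ∀ ρ ∈ R, ∀ ρ' ∈ R, ρ⁻¹ * ρ' ∈ M.fixingSubgroup → ρ = ρ') :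
    fixedField (MulAction.stabilizer (E ≃ₐ[F] E) S) =
      adjoin F {y | ∃ x ∈ M, y = ∑ ρ ∈ R, ρ x} := by
  set T := {y | ∃ x ∈ M, y = ∑ ρ ∈ R, ρ x}
  have hstab (γ : E ≃ₐ[F] E) : γ ∈ MulAction.stabilizer _ S ↔ ∀ y ∈ T, γ y = y := by
    rw [MulAction.mem_stabilizer_iff, smul_eq_self_iff_forall_map_sum_eq hS hRS hRcover hRsep]
    exact ⟨fun h y ⟨x, hx, hy⟩ => hy ▸ h x hx, fun h x hx => h _ ⟨x, hx, rfl⟩⟩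
  refine le_antisymm ?_ (adjoin_le_iff.mpr fun y hy γ => (hstab γ).mp γ.2 y hy)
  rw [← InfiniteGalois.fixedField_fixingSubgroup (adjoin F T)]
  exact fixedField_le fun γ hγ => (hstab γ).mpr fun y hy => hγ ⟨y, subset_adjoin F T hy⟩

end CosetRepresentatives

end IntermediateField

theorem reflex_field_eq_adjoin_type_traces_general
    (K L : IntermediateField ℚ ℂ) [IsGalois ℚ L]
    (H : Set (L ≃ₐ[ℚ] L)) (hH : H = {γ | ∀ x : L, (x : ℂ) ∈ K → γ x = x})
    (S : Set (L ≃ₐ[ℚ] L)) (hSH : S * H = S)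
    (Hhat : Subgroup (L ≃ₐ[ℚ] L)) (hHhat : ∀ γ, γ ∈ Hhat ↔ (fun s => γ * s) '' S = S)
    (R : Finset (L ≃ₐ[ℚ] L)) (hRS : ↑R ⊆ S)
    (hRcover : ∀ s ∈ S, ∃ ρ ∈ R, ρ⁻¹ * s ∈ H)
    (hRsep : ∀ ρ ∈ R, ∀ ρ' ∈ R, ρ⁻¹ * ρ' ∈ H → ρ = ρ') :
    IntermediateField.fixedField Hhat =
      IntermediateField.adjoin ℚ {y : L | ∃ x : L, (x : ℂ) ∈ K ∧ y = ∑ ρ ∈ R, ρ x} := by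
  let M : IntermediateField ℚ L := K.comap L.val
  have hHM : H = ↑M.fixingSubgroup := by
    rw [hH]
    ext γ
    exact (IntermediateField.mem_fixingSubgroup_iff M γ).symm
  have hHhatS : Hhat = MulAction.stabilizer _ S := by
    ext γ
    rw [hHhat, MulAction.mem_stabilizer_iff, ← Set.image_smul]
    simp only [smul_eq_mul]
  subst hHM hHhatS
  exact IntermediateField.fixedField_stabilizer_eq_adjoin (M := M) hSH hRS hRcover hRsep

/-- In the reflex-field setting (CM-field `K ⊆ ℂ` with normal closure
`L`, `H = Gal(L/K)`, CM-type `S` with stabilizer `Hhat` and reflex field `K̂ = L^Hhat`),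
if `R ⊆ S` is a set of representatives for the left cosets of `H` contained in `S`,
then `K̂` is generated over `ℚ` by the sums `∑_{ρ ∈ R} ρ(x)` for `x ∈ K`. -/
theorem reflex_field_eq_adjoin_type_traces
    (K L : IntermediateField ℚ ℂ) [NumberField K] (g : ℕ)
    (hdeg : Module.finrank ℚ K = 2 * g)
    (hCM : IsCMField K)
    (hKL : K ≤ L) [IsGalois ℚ L]
    (hmin : ∀ M : IntermediateField ℚ ℂ, K ≤ M → IsGalois ℚ M → L ≤ M)
    (c : L ≃ₐ[ℚ] L) (hc : ∀ x : L, (c x : ℂ) = starRingEnd ℂ (x : ℂ))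
    (H : Set (L ≃ₐ[ℚ] L)) (hH : H = {γ | ∀ x : L, (x : ℂ) ∈ K → γ x = x})
    (S : Set (L ≃ₐ[ℚ] L)) (hSH : S * H = S)
    (hcover : ∀ γ : L ≃ₐ[ℚ] L, γ ∈ S ∨ γ ∈ (fun s => c * s) '' S)
    (hdisj : Disjoint S ((fun s => c * s) '' S))
    (Hhat : Subgroup (L ≃ₐ[ℚ] L)) (hHhat : ∀ γ, γ ∈ Hhat ↔ (fun s => γ * s) '' S = S)
    (R : Finset (L ≃ₐ[ℚ] L)) (hRS : ↑R ⊆ S)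
    (hRcover : ∀ s ∈ S, ∃ ρ ∈ R, ρ⁻¹ * s ∈ H)
    (hRsep : ∀ ρ ∈ R, ∀ ρ' ∈ R, ρ⁻¹ * ρ' ∈ H → ρ = ρ') :
    IntermediateField.fixedField Hhat =
      IntermediateField.adjoin ℚ {y : L | ∃ x : L, (x : ℂ) ∈ K ∧ y = ∑ ρ ∈ R, ρ x} :=
  reflex_field_eq_adjoin_type_traces_general K L H hH S hSH Hhat hHhat R hRS hRcover hRsep
end

section
/- Let K ⊆ ℂ be a CM-field of degree 2g, let L ⊆ ℂ be the normal closure of K over ℚ, let G = Gal(L/ℚ), let c ∈ G be the restriction of complex conjugation to L, and let H = {γ ∈ G : γ(x) = x for all x ∈ K}. Let S ⊆ G satisfy S·H = S and let G be the disjoint union of S and cS. Define Ĥ = {γ ∈ G : γS = S} and K̂ = L^Ĥ. Let R ⊆ S be a set of representatives for the left cosets of H contained in S. Then for every x ∈ K, the type norm N_Φ(x) = ∏_{ρ∈R} ρ(x) lies in the reflex field K̂, i.e., it is fixed by every element of Ĥ. -/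
open scoped Pointwise

/-!
Since `x ∈ K` is fixed by `H`, the value `ρ x` depends only on the coset `ρH`, so the type norm
is a product over the cosets of `H` contained in `S`, independent of the representatives `R`.
An element `γ` with `γS = S` carries `R` to another set of representatives `γR` of these
cosets, and `γ (∏ ρ x) = ∏ (γρ) x`.
-/

structure IsLeftCosetTransversal {G : Type*} [Group G] (H : Subgroup G) (S : Set G)
    (R : Finset G) : Prop where
  subset : ↑R ⊆ S
  exists_inv_mul_mem : ∀ s ∈ S, ∃ ρ ∈ R, ρ⁻¹ * s ∈ H
  eq_of_inv_mul_mem : ∀ ρ ∈ R, ∀ ρ' ∈ R, ρ⁻¹ * ρ' ∈ H → ρ = ρ'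

namespace IsLeftCosetTransversal

variable {G : Type*} [Group G] {H : Subgroup G} {S : Set G} {R : Finset G}

theorem image_mul_left [DecidableEq G] (hR : IsLeftCosetTransversal H S R) (γ : G) :
    IsLeftCosetTransversal H ((γ * ·) '' S) (R.image (γ * ·)) where
  subset := by
    rw [Finset.coe_image]
    exact Set.image_mono hR.subset
  exists_inv_mul_mem := by
    rintro _ ⟨s, hs, rfl⟩
    obtain ⟨ρ, hρR, hρs⟩ := hR.exists_inv_mul_mem s hs
    exact ⟨γ * ρ, Finset.mem_image_of_mem _ hρR, by simpa [mul_assoc] using hρs⟩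
  eq_of_inv_mul_mem := by
    simp only [Finset.mem_image]
    rintro _ ⟨ρ, hρR, rfl⟩ _ ⟨ρ', hρ'R, rfl⟩ hmem
    rw [hR.eq_of_inv_mul_mem ρ hρR ρ' hρ'R (by simpa [mul_assoc] using hmem)]

theorem prod_eq {M : Type*} [CommMonoid M] {R' : Finset G} (hR : IsLeftCosetTransversal H S R)
    (hR' : IsLeftCosetTransversal H S R') {f : G → M} (hf : ∀ a, ∀ h ∈ H, f (a * h) = f a) :
    ∏ ρ ∈ R, f ρ = ∏ ρ ∈ R', f ρ := by
  choose! i hiR hiH using fun ρ (hρ : ρ ∈ R) => hR'.exists_inv_mul_mem ρ (hR.subset hρ)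
  refine Finset.prod_nbij i hiR ?inj ?surj ?val
  case inj =>
    intro ρ₁ hρ₁ ρ₂ hρ₂ hi
    refine hR.eq_of_inv_mul_mem ρ₁ hρ₁ ρ₂ hρ₂ ?_
    simpa [hi, mul_assoc] using H.mul_mem (H.inv_mem (hiH ρ₁ hρ₁)) (hiH ρ₂ hρ₂)
  case surj =>
    intro ρ' hρ'
    obtain ⟨ρ, hρR, hρH⟩ := hR.exists_inv_mul_mem ρ' (hR'.subset hρ')
    refine ⟨ρ, hρR, hR'.eq_of_inv_mul_mem _ (hiR ρ hρR) ρ' hρ' ?_⟩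
    simpa [mul_assoc] using H.mul_mem (hiH ρ hρR) hρH
  case val =>
    intro ρ hρ
    simpa using hf (i ρ) _ (hiH ρ hρ)

theorem prod_mul_left_eq [DecidableEq G] {M : Type*} [CommMonoid M]
    (hR : IsLeftCosetTransversal H S R) {f : G → M} (hf : ∀ a, ∀ h ∈ H, f (a * h) = f a)
    {γ : G} (hγ : (γ * ·) '' S = S) :
    ∏ ρ ∈ R, f (γ * ρ) = ∏ ρ ∈ R, f ρ := by
  rw [← Finset.prod_image (mul_right_injective γ).injOn]
  exact (hγ ▸ hR.image_mul_left γ).prod_eq hR hf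

end IsLeftCosetTransversal

theorem typeNorm_mem_reflex_field_general
    (K L : IntermediateField ℚ ℂ)
    (H : Set (L ≃ₐ[ℚ] L)) (hH : H = {γ | ∀ x : L, (x : ℂ) ∈ K → γ x = x})
    (S : Set (L ≃ₐ[ℚ] L))
    (R : Finset (L ≃ₐ[ℚ] L)) (hRS : ↑R ⊆ S)
    (hRcover : ∀ s ∈ S, ∃ ρ ∈ R, ρ⁻¹ * s ∈ H)
    (hRsep : ∀ ρ ∈ R, ∀ ρ' ∈ R, ρ⁻¹ * ρ' ∈ H → ρ = ρ')
    (x : L) (hx : (x : ℂ) ∈ K) :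
    ∀ γ : L ≃ₐ[ℚ] L, (fun s => γ * s) '' S = S →
      γ (∏ ρ ∈ R, ρ x) = ∏ ρ ∈ R, ρ x := by
  intro γ hγ
  classical
  obtain rfl : H = fixingSubgroup (L ≃ₐ[ℚ] L) {y : L | (y : ℂ) ∈ K} := by
    ext
    simp [hH, mem_fixingSubgroup_iff, AlgEquiv.smul_def]
  have hR : IsLeftCosetTransversal _ S R := ⟨hRS, hRcover, hRsep⟩
  have hfix : ∀ ρ, ∀ h ∈ fixingSubgroup (L ≃ₐ[ℚ] L) {y : L | (y : ℂ) ∈ K}, (ρ * h) x = ρ x :=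
    fun ρ h hh => congrArg ρ ((mem_fixingSubgroup_iff _).mp hh x hx)
  rw [map_prod]
  exact hR.prod_mul_left_eq (f := fun ρ => ρ x) hfix hγ

/-- In the reflex-field setting (CM-field `K ⊆ ℂ` with normal closure
`L`, `H = Gal(L/K)`, CM-type `S` with stabilizer `Ĥ = {γ : γS = S}`), if `R ⊆ S` is a
set of representatives for the left cosets of `H` contained in `S`, then for every
`x ∈ K` the type norm `N_Φ(x) = ∏_{ρ ∈ R} ρ(x)` is fixed by every element of `Ĥ`,
i.e. it lies in the reflex field `K̂ = L^Ĥ`. -/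
theorem typeNorm_mem_reflex_field
    (K L : IntermediateField ℚ ℂ) [NumberField K] (g : ℕ)
    (hdeg : Module.finrank ℚ K = 2 * g)
    (hCM : IsCMField K)
    (hKL : K ≤ L) [IsGalois ℚ L]
    (hmin : ∀ M : IntermediateField ℚ ℂ, K ≤ M → IsGalois ℚ M → L ≤ M)
    (c : L ≃ₐ[ℚ] L) (hc : ∀ x : L, (c x : ℂ) = starRingEnd ℂ (x : ℂ))
    (H : Set (L ≃ₐ[ℚ] L)) (hH : H = {γ | ∀ x : L, (x : ℂ) ∈ K → γ x = x})
    (S : Set (L ≃ₐ[ℚ] L)) (hSH : S * H = S)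
    (hcover : ∀ γ : L ≃ₐ[ℚ] L, γ ∈ S ∨ γ ∈ (fun s => c * s) '' S)
    (hdisj : Disjoint S ((fun s => c * s) '' S))
    (R : Finset (L ≃ₐ[ℚ] L)) (hRS : ↑R ⊆ S)
    (hRcover : ∀ s ∈ S, ∃ ρ ∈ R, ρ⁻¹ * s ∈ H)
    (hRsep : ∀ ρ ∈ R, ∀ ρ' ∈ R, ρ⁻¹ * ρ' ∈ H → ρ = ρ')
    (x : L) (hx : (x : ℂ) ∈ K) :
    ∀ γ : L ≃ₐ[ℚ] L, (fun s => γ * s) '' S = S →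
      γ (∏ ρ ∈ R, ρ x) = ∏ ρ ∈ R, ρ x :=
  typeNorm_mem_reflex_field_general K L H hH S R hRS hRcover hRsep x hx
end

section
/- Let K ⊆ ℂ be a CM-field of degree 2g, let L ⊆ ℂ be the normal closure of K over ℚ, let G = Gal(L/ℚ), let c ∈ G be the restriction of complex conjugation to L, and let H = {γ ∈ G : γ(x) = x for all x ∈ K}. Let S ⊆ G satisfy S·H = S and let G be the disjoint union of S and cS. Define Ĥ = {γ ∈ G : γS = S}, K̂ = L^Ĥ, and Ŝ = {σ^{-1} : σ ∈ S}. Then Ŝ·Ĥ = Ŝ (Ŝ is a union of left cosets of Ĥ), G is the disjoint union of Ŝ and cŜ, and the number of distinct left cosets of Ĥ contained in Ŝ equals [K̂ : ℚ]/2. In other words, Ŝ encodes a CM-type Ψ of the reflex field K̂ (the reflex type). -/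
open scoped Pointwise

/-! Complex conjugation commutes with every embedding of a CM-field, so on `K` it commutes with
every `σ ∈ G`. The elements of `L` on which `c` commutes with all of `G` form a Galois
subextension containing `K`, hence all of `L`: `c` is a central involution. Inversion therefore
carries `G = S ⊔ cS` to `G = S⁻¹ ⊔ cS⁻¹`. Both halves are unions of left cosets of `Ĥ` and
left multiplication by `c` swaps them, so each contains half of the `[G : Ĥ] = [K̂ : ℚ]` cosets. -/

namespace Subfield

variable {K : Type*} [Field K] {F : Subfield K}

theorem exists_notMem_of_finrank_ne_one (h : Module.finrank F K ≠ 1) : ∃ β : K, β ∉ F := by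
  by_contra! hF
  exact h <| Algebra.finrank_eq_one_iff_bijective_algebraMap.mpr
    ⟨(algebraMap F K).injective, fun x => ⟨⟨x, hF x⟩, rfl⟩⟩

theorem exists_add_mul_eq_of_finrank_eq_two (h : Module.finrank F K = 2) {β : K} (hβ : β ∉ F)
    (x : K) : ∃ a b : F, (a : K) + b * β = x := by
  have : FiniteDimensional F K := .of_finrank_eq_succ h
  have hli : LinearIndependent F ![(1 : K), β] :=
    (LinearIndependent.pair_iff' one_ne_zero).mpr fun a ha => hβ (by
      rw [← ha, Algebra.smul_def, mul_one]; exact a.2)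
  have hspan := hli.span_eq_top_of_card_eq_finrank' (by simp [h])
  obtain ⟨a, b, hab⟩ := Submodule.mem_span_pair.mp
    (by rw [Matrix.range_cons_cons_empty] at hspan; exact hspan ▸ Submodule.mem_top (x := x))
  rw [Algebra.smul_def, Algebra.smul_def, mul_one] at hab
  exact ⟨a, b, hab⟩

end Subfield

theorem Complex.conj_eq_sub_of_mul_self_eq {z A B : ℂ} (hz : z.im ≠ 0) (hA : A.im = 0)
    (hB : B.im = 0) (h : z * z = A + B * z) : starRingEnd ℂ z = B - z := by
  have him := congrArg Complex.im h
  simp only [Complex.mul_im, Complex.add_im, hA, hB] at him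
  have hre : B.re = 2 * z.re := mul_right_cancel₀ hz (by linarith)
  apply Complex.ext <;>
    simp only [Complex.conj_re, Complex.conj_im, Complex.sub_re, Complex.sub_im, hre, hB] <;> ring

theorem IsCMField.exists_conj_comp_eq {K : Type*} [Field K] (hK : IsCMField K) :
    ∃ χ : K → K, ∀ (ψ : K →+* ℂ) (x : K), starRingEnd ℂ (ψ x) = ψ (χ x) := by
  obtain ⟨hcomplex, F, hreal, h2⟩ := hK
  obtain ⟨β, hβ⟩ := Subfield.exists_notMem_of_finrank_ne_one (by rw [h2]; norm_num)
  have hdecomp := Subfield.exists_add_mul_eq_of_finrank_eq_two h2 hβ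
  obtain ⟨a, b, hab⟩ := hdecomp (β * β)
  choose f g hfg using hdecomp
  -- `β` and `b - β` are the roots of `X² - bX - a`, whose coefficients every embedding sends
  -- into `ℝ`; as `ψ β` is not real, conjugation swaps it with `ψ (b - β)`.
  refine ⟨fun x => f x + g x * (b - β), fun ψ x => ?_⟩
  have hψF : ∀ u : F, (ψ u).im = 0 := hreal (ψ.comp F.subtype)
  have hψβ : (ψ β).im ≠ 0 := by
    intro h0
    obtain ⟨y, hy⟩ := hcomplex ψ
    rw [← hfg y, map_add, map_mul, Complex.add_im, Complex.mul_im, hψF, hψF, h0] at hy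
    simp at hy
  have hconjβ : starRingEnd ℂ (ψ β) = ψ b - ψ β :=
    Complex.conj_eq_sub_of_mul_self_eq hψβ (hψF a) (hψF b)
      (by simp only [← map_mul, ← map_add, hab])
  have hconjF : ∀ u : F, starRingEnd ℂ (ψ u) = ψ u := fun u => Complex.conj_eq_iff_im.mpr (hψF u)
  conv_lhs => rw [← hfg x]
  simp only [map_add, map_mul, map_sub, hconjF, hconjβ]

theorem IsCMField.commute_conj_apply {F : Type*} [Field F] [Algebra F ℂ]
    {K L : IntermediateField F ℂ} (hCM : IsCMField K) (hKL : K ≤ L)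
    (c : L ≃ₐ[F] L) (hc : ∀ x : L, (c x : ℂ) = starRingEnd ℂ (x : ℂ))
    (σ : L ≃ₐ[F] L) (x : L) (hx : (x : ℂ) ∈ K) : σ (c x) = c (σ x) := by
  obtain ⟨χ, hχ⟩ := hCM.exists_conj_comp_eq
  let k : K := ⟨x, hx⟩
  let ψ : K →+* ℂ := L.val.toRingHom.comp (σ.toRingHom.comp (IntermediateField.inclusion hKL))
  have hcx : c x = IntermediateField.inclusion hKL (χ k) :=
    Subtype.ext ((hc x).trans (hχ K.val.toRingHom k))
  apply Subtype.ext
  calc ((σ (c x) : L) : ℂ) = ψ (χ k) := by rw [hcx]; rfl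
    _ = starRingEnd ℂ (ψ k) := (hχ ψ k).symm
    _ = (c (σ x) : ℂ) := (hc (σ x)).symm

namespace IntermediateField

variable {F E Ω : Type*} [Field F] [Field E] [Algebra F E] [Field Ω] [Algebra F Ω]

def commutingField (c : E ≃ₐ[F] E) : IntermediateField F E where
  carrier := {x | ∀ σ : E ≃ₐ[F] E, σ (c x) = c (σ x)}
  mul_mem' {a b} ha hb σ := by simp only [map_mul, ha σ, hb σ]
  add_mem' {a b} ha hb σ := by simp only [map_add, ha σ, hb σ]
  algebraMap_mem' r σ := by simp only [AlgEquiv.commutes]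
  inv_mem' x hx σ := by simp only [map_inv₀, hx σ]

theorem mem_commutingField {c : E ≃ₐ[F] E} {x : E} :
    x ∈ commutingField c ↔ ∀ σ : E ≃ₐ[F] E, σ (c x) = c (σ x) := Iff.rfl

instance isGalois_commutingField [IsGalois F E] (c : E ≃ₐ[F] E) :
    IsGalois F (commutingField c) := by
  have : Normal F (commutingField c) := by
    refine normal_iff_forall_map_le'.mpr fun σ _ ⟨y, hy, hσy⟩ τ => ?_
    rw [← hσy]
    show τ (c (σ y)) = c (τ (σ y))
    rw [← hy σ, ← AlgEquiv.mul_apply, hy (τ * σ), AlgEquiv.mul_apply]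
  exact ⟨⟩

theorem commute_of_forall_mem_apply_comm {K L : IntermediateField F Ω}
    (hKL : K ≤ L) [hL : IsGalois F L]
    (hmin : ∀ M : IntermediateField F Ω, K ≤ M → IsGalois F M → L ≤ M)
    (c : L ≃ₐ[F] L) (hK : ∀ (σ : L ≃ₐ[F] L) (x : L), (x : Ω) ∈ K → σ (c x) = c (σ x))
    (σ : L ≃ₐ[F] L) : Commute c σ := by
  have hGalois : IsGalois F (lift (commutingField c)) :=
    .of_algEquiv (liftAlgEquiv (commutingField c))
  have hKM : K ≤ lift (commutingField c) := fun z hz =>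
    (mem_lift ⟨z, hKL hz⟩).mpr fun σ => hK σ ⟨z, hKL hz⟩ hz
  refine AlgEquiv.ext fun x => (mem_commutingField.mp ?_ σ).symm
  exact (mem_lift x).mp (hmin _ hKM hGalois x.2)

theorem finiteDimensional_of_forall_isGalois_le [CharZero F] [IsAlgClosed Ω]
    {K L : IntermediateField F Ω} [FiniteDimensional F K]
    (hmin : ∀ M : IntermediateField F Ω, K ≤ M → IsGalois F M → L ≤ M) :
    FiniteDimensional F L := by
  have : Normal F (normalClosure F K Ω) :=
    (Algebra.IsAlgebraic.isNormalClosure_normalClosure fun _ => IsAlgClosed.splits _).normal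
  have hL := hmin _ (le_normalClosure K) ⟨⟩
  exact .of_injective (inclusion hL).toLinearMap (inclusion hL).injective

end IntermediateField

section Group

variable {G : Type*} [Group G]

theorem Set.inv_mul_subgroup_eq_inv {S : Set G} {H : Subgroup G}
    (hH : H ≤ MulAction.stabilizer G S) : S⁻¹ * (H : Set G) = S⁻¹ := by
  refine subset_antisymm ?_ fun ρ hρ => ⟨ρ, hρ, 1, H.one_mem, mul_one ρ⟩
  rintro _ ⟨ρ, hρ, h, hh, rfl⟩
  have hstab : h⁻¹ • S = S := hH (H.inv_mem hh)
  rw [Set.mem_inv, mul_inv_rev, ← hstab]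
  exact Set.smul_mem_smul_set hρ

theorem Set.inv_image_mul_left_of_central {c : G} (hcentral : ∀ g, c * g = g * c)
    (hc : c * c = 1) (S : Set G) : ((c * ·) '' S)⁻¹ = (c * ·) '' S⁻¹ := by
  have hinv : c⁻¹ = c := inv_eq_of_mul_eq_one_right hc
  ext γ
  simp only [Set.mem_inv, Set.mem_image]
  constructor
  · rintro ⟨s, hs, hsγ⟩
    exact ⟨s⁻¹, by simpa using hs, by rw [← inv_inv γ, ← hsγ, mul_inv_rev, hinv, hcentral]⟩
  · rintro ⟨s, hs, rfl⟩
    exact ⟨s⁻¹, hs, by rw [mul_inv_rev, hinv, hcentral]⟩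

theorem QuotientGroup.two_mul_card_image_mk_eq_index {H : Subgroup G} [H.FiniteIndex]
    {T : Set G} (hT : T * (H : Set G) = T) (c : G)
    (hcover : ∀ γ, γ ∈ T ∨ γ ∈ (c * ·) '' T) (hdisj : Disjoint T ((c * ·) '' T)) :
    2 * Nat.card ((QuotientGroup.mk : G → G ⧸ H) '' T) = H.index := by
  set A := (QuotientGroup.mk : G → G ⧸ H) '' T
  have hsat : ∀ g : G, (g : G ⧸ H) ∈ A → g ∈ T := fun g hg => by
    rw [← hT, ← QuotientGroup.preimage_image_mk_eq_mul]; exact hg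
  have hcA : (c • ·) '' A = (QuotientGroup.mk : G → G ⧸ H) '' ((c * ·) '' T) := by
    rw [Set.image_image, Set.image_image]; rfl
  have hunion : A ∪ (c • ·) '' A = Set.univ := by
    refine Set.eq_univ_of_forall fun q => ?_
    obtain ⟨γ, rfl⟩ := QuotientGroup.mk_surjective q
    rw [hcA]
    exact (hcover γ).imp (Set.mem_image_of_mem _) (Set.mem_image_of_mem _)
  have hdisjA : Disjoint A ((c • ·) '' A) := by
    rw [hcA, Set.disjoint_right]
    rintro _ ⟨γ, hγ, rfl⟩ hA
    exact Set.disjoint_right.mp hdisj hγ (hsat γ hA)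
  rw [Nat.card_coe_set_eq, H.index_eq_card, ← Set.ncard_univ, ← hunion,
    Set.ncard_union_eq hdisjA, Set.ncard_image_of_injective _ (MulAction.injective c), two_mul]

theorem QuotientGroup.card_leftCosets_eq_card_image_mk (H : Subgroup G) (A : Set G) :
    Nat.card {T : Set G // ∃ ρ ∈ A, T = (ρ * ·) '' (H : Set G)} =
      Nat.card ((QuotientGroup.mk : G → G ⧸ H) '' A) := by
  have hinj : Function.Injective fun q : G ⧸ H => (QuotientGroup.mk : G → G ⧸ H) ⁻¹' {q} :=
    (Set.preimage_injective.mpr QuotientGroup.mk_surjective).comp Set.singleton_injective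
  have hcosets : {T : Set G | ∃ ρ ∈ A, T = (ρ * ·) '' (H : Set G)} =
      (fun q : G ⧸ H => (QuotientGroup.mk : G → G ⧸ H) ⁻¹' {q}) '' (QuotientGroup.mk '' A) := by
    ext T
    simp only [Set.mem_ofPred_eq, Set.image_image]
    refine exists_congr fun ρ => and_congr_right fun _ => ?_
    change T = ρ • (H : Set G) ↔ _
    rw [← QuotientGroup.eq_class_eq_leftCoset, eq_comm]; rfl
  rw [← Nat.card_image_of_injective hinj, ← hcosets]
  rfl

end Group

theorem reflex_type_is_CMtype_general
    (K L : IntermediateField ℚ ℂ) [NumberField K]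
    (hCM : IsCMField K)
    (hKL : K ≤ L) [IsGalois ℚ L]
    (hmin : ∀ M : IntermediateField ℚ ℂ, K ≤ M → IsGalois ℚ M → L ≤ M)
    (c : L ≃ₐ[ℚ] L) (hc : ∀ x : L, (c x : ℂ) = starRingEnd ℂ (x : ℂ))
    (S : Set (L ≃ₐ[ℚ] L))
    (hcover : ∀ γ : L ≃ₐ[ℚ] L, γ ∈ S ∨ γ ∈ (fun s => c * s) '' S)
    (hdisj : Disjoint S ((fun s => c * s) '' S))
    (Hhat : Subgroup (L ≃ₐ[ℚ] L)) (hHhat : ∀ γ, γ ∈ Hhat ↔ (fun s => γ * s) '' S = S) :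
    S⁻¹ * (Hhat : Set (L ≃ₐ[ℚ] L)) = S⁻¹ ∧
    (∀ γ : L ≃ₐ[ℚ] L, γ ∈ S⁻¹ ∨ γ ∈ (fun s => c * s) '' S⁻¹) ∧
    Disjoint S⁻¹ ((fun s => c * s) '' S⁻¹) ∧
    2 * Nat.card {T : Set (L ≃ₐ[ℚ] L) //
        ∃ ρ ∈ S⁻¹, T = (fun h => ρ * h) '' (Hhat : Set (L ≃ₐ[ℚ] L))} =
      Module.finrank ℚ (IntermediateField.fixedField Hhat) := by
  -- `IsGalois ℚ L` is stated for `DivisionRing.toRatAlgebra`, not `L.algebra'`; the two agree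
  -- only up to unfolding, so instance search does not find it.
  have hcentral (σ : L ≃ₐ[ℚ] L) : c * σ = σ * c :=
    IntermediateField.commute_of_forall_mem_apply_comm hKL (hL := ‹_›) hmin c
      (hCM.commute_conj_apply hKL c hc) σ
  have hc2 : c * c = 1 := AlgEquiv.ext fun x => Subtype.ext <| by
    simp only [AlgEquiv.mul_apply, hc, Complex.conj_conj, AlgEquiv.one_apply]
  have hinv := Set.inv_image_mul_left_of_central hcentral hc2 S
  have hcoset : S⁻¹ * (Hhat : Set (L ≃ₐ[ℚ] L)) = S⁻¹ :=
    Set.inv_mul_subgroup_eq_inv fun γ hγ => (hHhat γ).mp hγ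
  have hcover' (γ : L ≃ₐ[ℚ] L) : γ ∈ S⁻¹ ∨ γ ∈ (c * ·) '' S⁻¹ := by
    rw [← hinv]; exact hcover γ⁻¹
  have hdisj' : Disjoint S⁻¹ ((c * ·) '' S⁻¹) := hinv ▸ hdisj.preimage _
  have : FiniteDimensional ℚ L := IntermediateField.finiteDimensional_of_forall_isGalois_le hmin
  refine ⟨hcoset, hcover', hdisj', ?_⟩
  rw [IntermediateField.finrank_eq_fixingSubgroup_index,
    IntermediateField.fixingSubgroup_fixedField,
    QuotientGroup.card_leftCosets_eq_card_image_mk]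
  exact QuotientGroup.two_mul_card_image_mk_eq_index hcoset c hcover' hdisj'

/-- In the reflex-field setting, `Ŝ = S⁻¹` is a union of left cosets
of `Ĥ`, `G` is the disjoint union of `Ŝ` and `cŜ`, and the number of left cosets of
`Ĥ` contained in `Ŝ` equals `[K̂ : ℚ]/2`; that is, `Ŝ` encodes a CM-type of the reflex
field `K̂ = L^Ĥ` (the reflex type). -/
theorem reflex_type_is_CMtype
    (K L : IntermediateField ℚ ℂ) [NumberField K] (g : ℕ)
    (hdeg : Module.finrank ℚ K = 2 * g)
    (hCM : IsCMField K)
    (hKL : K ≤ L) [IsGalois ℚ L]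
    (hmin : ∀ M : IntermediateField ℚ ℂ, K ≤ M → IsGalois ℚ M → L ≤ M)
    (c : L ≃ₐ[ℚ] L) (hc : ∀ x : L, (c x : ℂ) = starRingEnd ℂ (x : ℂ))
    (H : Set (L ≃ₐ[ℚ] L)) (hH : H = {γ | ∀ x : L, (x : ℂ) ∈ K → γ x = x})
    (S : Set (L ≃ₐ[ℚ] L)) (hSH : S * H = S)
    (hcover : ∀ γ : L ≃ₐ[ℚ] L, γ ∈ S ∨ γ ∈ (fun s => c * s) '' S)
    (hdisj : Disjoint S ((fun s => c * s) '' S))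
    (Hhat : Subgroup (L ≃ₐ[ℚ] L)) (hHhat : ∀ γ, γ ∈ Hhat ↔ (fun s => γ * s) '' S = S) :
    S⁻¹ * (Hhat : Set (L ≃ₐ[ℚ] L)) = S⁻¹ ∧
    (∀ γ : L ≃ₐ[ℚ] L, γ ∈ S⁻¹ ∨ γ ∈ (fun s => c * s) '' S⁻¹) ∧
    Disjoint S⁻¹ ((fun s => c * s) '' S⁻¹) ∧
    2 * Nat.card {T : Set (L ≃ₐ[ℚ] L) //
        ∃ ρ ∈ S⁻¹, T = (fun h => ρ * h) '' (Hhat : Set (L ≃ₐ[ℚ] L))} =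
      Module.finrank ℚ (IntermediateField.fixedField Hhat) :=
  reflex_type_is_CMtype_general K L hCM hKL hmin c hc S hcover hdisj Hhat hHhat
end

section
/- Let K be a CM-field of degree 2g and let L be the normal closure of K over ℚ (inside a fixed algebraic closure). Then the degree [L : ℚ] divides 2^g · g!. -/
/-!
Precomposition with the complex conjugation `ι` of `K` (the nontrivial automorphism of `K` over
its totally real subfield) is a fixed-point-free involution of the `2g`-element set of embeddings
`K → L`, and it commutes with the action of `Gal(L/ℚ)` by postcomposition. This action is faithful
because `L` is generated by the images of these embeddings. Hence `Gal(L/ℚ)` embeds into the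
centralizer of a product of `g` disjoint transpositions in `S_{2g}`, the hyperoctahedral group
`C₂ ≀ S_g` of order `2^g g!`.
-/

open Module Equiv Subgroup Nat IntermediateField

namespace Equiv.Perm

variable {α : Type*} [Fintype α] [DecidableEq α]

theorem cycleType_eq_replicate_two_of_involutive {r : Perm α} (hr : Function.Involutive r)
    (hfree : ∀ x, r x ≠ x) {n : ℕ} (hcard : Fintype.card α = 2 * n) :
    r.cycleType = Multiset.replicate n 2 := by
  have hmem : ∀ k ∈ r.cycleType, k = 2 := fun k hk =>
    le_antisymm (Nat.le_of_dvd two_pos <| (dvd_of_mem_cycleType hk).trans <|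
      orderOf_dvd_of_pow_eq_one (Perm.ext hr)) (two_le_of_mem_cycleType hk)
  have hsupp : r.support = Finset.univ :=
    Finset.eq_univ_of_forall fun x => mem_support.mpr (hfree x)
  have hsum := sum_cycleType r
  rw [Multiset.eq_replicate_card.mpr hmem, Multiset.sum_replicate, hsupp, Finset.card_univ,
    hcard, smul_eq_mul] at hsum
  rw [Multiset.eq_replicate_card.mpr hmem]
  congr 1
  omega

theorem nat_card_centralizer_of_involutive {r : Perm α} (hr : Function.Involutive r)
    (hfree : ∀ x, r x ≠ x) {n : ℕ} (hcard : Fintype.card α = 2 * n) :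
    Nat.card (centralizer {r}) = 2 ^ n * n ! := by
  rw [nat_card_centralizer, cycleType_eq_replicate_two_of_involutive hr hfree hcard,
    Multiset.sum_replicate, Multiset.prod_replicate, hcard, smul_eq_mul, mul_comm n 2,
    Nat.sub_self, factorial_zero, one_mul]
  rcases n.eq_zero_or_pos with rfl | hn
  · simp
  · simp [Multiset.toFinset_replicate, hn.ne']

end Equiv.Perm

theorem nat_card_dvd_of_faithful_of_commute_involutive {G α : Type*} [Group G] [MulAction G α]
    [Finite α] (hfaith : Function.Injective (MulAction.toPermHom G α)) {r : α → α}
    (hr : Function.Involutive r) (hfree : ∀ x, r x ≠ x)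
    (hcomm : ∀ (g : G) x, r (g • x) = g • r x) {n : ℕ} (hcard : Nat.card α = 2 * n) :
    Nat.card G ∣ 2 ^ n * n ! := by
  classical
  have := Fintype.ofFinite α
  rw [← Perm.nat_card_centralizer_of_involutive (r := hr.toPerm) hr hfree
      (by rwa [← Nat.card_eq_fintype_card]),
    Nat.card_congr (MonoidHom.ofInjective hfaith).toEquiv]
  refine card_dvd_of_le ?_
  rintro _ ⟨g, rfl⟩
  rw [mem_centralizer_singleton_iff]
  exact Perm.ext fun x => (hcomm g x).symm

theorem exists_algEquiv_orderOf_eq_two (F : Type*) {E K : Type*} [Field F] [Field E] [Field K]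
    [CharZero E] [Algebra F E] [Algebra E K] [Algebra F K] [IsScalarTower F E K]
    (h : finrank E K = 2) : ∃ σ : K ≃ₐ[F] K, orderOf σ = 2 := by
  have : Algebra.IsQuadraticExtension E K := ⟨h⟩
  have : FiniteDimensional E K := Module.finite_of_finrank_eq_succ h
  obtain ⟨σ, hσ⟩ := exists_prime_orderOf_dvd_card' (G := Gal(K/E)) 2
    (by rw [IsGalois.card_aut_eq_finrank, h])
  exact ⟨σ.restrictScalars F,
    (orderOf_injective _ (AlgEquiv.restrictScalarsHom_injective F) σ).trans hσ⟩

section Embeddings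

variable {F K L : Type*} [Field F] [Field K] [Field L] [Algebra F K] [Algebra F L]

instance AlgHom.galoisMulAction : MulAction Gal(L/F) (K →ₐ[F] L) where
  smul τ f := (τ : L →ₐ[F] L).comp f
  one_smul _ := rfl
  mul_smul _ _ _ := rfl

theorem injective_toPermHom_of_normalClosure_eq_top (hN : normalClosure F K L = ⊤) :
    Function.Injective (MulAction.toPermHom Gal(L/F) (K →ₐ[F] L)) := by
  rw [← MonoidHom.ker_eq_bot_iff, eq_bot_iff, ← fixingSubgroup_top, ← hN, ← le_iff_le,
    normalClosure_le_iff]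
  rintro f _ ⟨x, rfl⟩ ⟨τ, hτ⟩
  exact DFunLike.congr_fun (Perm.ext_iff.mp hτ f) x

theorem finiteDimensional_of_normalClosure_eq_top [FiniteDimensional F K]
    (hN : normalClosure F K L = ⊤) : FiniteDimensional F L := by
  have := normalClosure.is_finiteDimensional F K L
  rw [hN] at this
  exact topEquiv.toLinearEquiv.finiteDimensional

theorem splits_minpoly_of_algHom [Normal F L] (f : K →ₐ[F] L) (x : K) :
    ((minpoly F x).map (algebraMap F L)).Splits := by
  rw [← minpoly.algHom_eq f f.injective]
  exact Normal.splits inferInstance _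

theorem nat_card_galois_dvd_of_orderOf_eq_two [FiniteDimensional F K]
    (hN : normalClosure F K L = ⊤) {σ : K ≃ₐ[F] K} (hσ : orderOf σ = 2) {n : ℕ}
    (hcard : Nat.card (K →ₐ[F] L) = 2 * n) : Nat.card Gal(L/F) ∣ 2 ^ n * n ! := by
  have hσσ : ∀ x, σ (σ x) = x := fun x =>
    DFunLike.congr_fun (hσ ▸ pow_orderOf_eq_one σ : σ ^ 2 = 1) x
  refine nat_card_dvd_of_faithful_of_commute_involutive
    (injective_toPermHom_of_normalClosure_eq_top hN) (r := fun f => f.comp σ.toAlgHom)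
    (fun f => AlgHom.ext fun x => congrArg f (hσσ x)) (fun f hf => ?_) (fun _ _ => rfl) hcard
  have hσ1 : σ = 1 := AlgEquiv.ext fun x => f.injective (DFunLike.congr_fun hf x)
  simp [hσ1] at hσ

end Embeddings

theorem normalClosure_eq_top_of_minimal {F E : Type*} [Field F] [Field E] [Algebra F E]
    {K L : IntermediateField F E} (hKL : K ≤ L) [IsGalois F L]
    (hmin : ∀ M : IntermediateField F E, K ≤ M → IsGalois F M → L ≤ M) :
    normalClosure F K L = ⊤ := by
  set N := normalClosure F K L
  have : IsGalois F (N.map L.val) := IsGalois.of_algEquiv (N.equivMap L.val)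
  have hKN : K ≤ N.map L.val := fun x hx =>
    ⟨inclusion hKL ⟨x, hx⟩, (inclusion hKL).fieldRange_le_normalClosure ⟨⟨x, hx⟩, rfl⟩, rfl⟩
  refine eq_top_iff.mpr fun y _ => ?_
  obtain ⟨w, hw, hwy⟩ := hmin _ hKN this y.2
  rwa [Subtype.ext hwy] at hw

/-- Let `K ⊆ ℂ` be a CM-field of degree `2g` and `L` its normal
closure over `ℚ` (the smallest Galois extension of `ℚ` containing `K`).  Then
`[L : ℚ]` divides `2^g ⬝ g!`. -/
theorem degree_normal_closure_of_CM_dvd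
    (K L : IntermediateField ℚ ℂ) [NumberField K] (g : ℕ)
    (hdeg : Module.finrank ℚ K = 2 * g)
    (hCM : IsCMField K)
    (hKL : K ≤ L) [IsGalois ℚ L]
    (hmin : ∀ M : IntermediateField ℚ ℂ, K ≤ M → IsGalois ℚ M → L ≤ M) :
    Module.finrank ℚ L ∣ 2 ^ g * Nat.factorial g := by
  -- `[IsGalois ℚ L]` is stated for `DivisionRing.toRatAlgebra`; instance search needs it for the
  -- defeq algebra structure `L.algebra'` of an intermediate field.
  have : @IsGalois ℚ _ L _ L.algebra' := ‹IsGalois ℚ L›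
  obtain ⟨-, F, -, hF⟩ := hCM
  obtain ⟨ι, hι⟩ := exists_algEquiv_orderOf_eq_two ℚ hF
  have hN := normalClosure_eq_top_of_minimal hKL hmin
  have := finiteDimensional_of_normalClosure_eq_top hN
  have hcard := AlgHom.natCard_of_splits ℚ K L (splits_minpoly_of_algHom (inclusion hKL))
  rw [← IsGalois.card_aut_eq_finrank]
  exact nat_card_galois_dvd_of_orderOf_eq_two hN hι (hcard.trans hdeg)
end

section
/- Let K ⊆ ℂ be a CM-field of degree 2g, let L ⊆ ℂ be the normal closure of K over ℚ, let G = Gal(L/ℚ), let c ∈ G be the restriction of complex conjugation to L, and let H = {γ ∈ G : γ(x) = x for all x ∈ K}. Let S ⊆ G satisfy S·H = S and let G be the disjoint union of S and cS. Define Ĥ = {γ ∈ G : γS = S} and Ŝ = {σ^{-1} : σ ∈ S}. Then the stabilizer {γ ∈ G : γŜ = Ŝ} equals the right stabilizer H' = {γ ∈ G : Sγ = S}, which contains H; consequently the reflex field of the reflex pair (K̂, Ψ) is the fixed field L^{H'}, which is contained in K. Moreover, if the CM-type is primitive, i.e., H' = H, then the reflex of (K̂, Ψ) is exactly (K, Φ):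 the stabilizer {γ ∈ G : γŜ = Ŝ} equals H, its fixed field is K, and the double reflex type is encoded by (Ŝ)^{-1} = S. -/
open scoped Pointwise

/-! Inversion carries the left translate `γ S⁻¹` to the right translate `S γ⁻¹`, so the
stabilizer of `Ŝ = S⁻¹` is the right stabilizer `H'` of `S`, a group containing `H` because
`S * H = S`. By Krull's Galois correspondence for `L/ℚ`, the fixed field of `H = Gal(L/K)` is `K`;
hence the fixed field of `H' ⊇ H` lies in `K`, with equality when `H' = H`. -/

namespace Set

variable {G : Type*} [Group G]

theorem smul_set_inv_eq_self_iff (s : Set G) (a : G) :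
    a • s⁻¹ = s⁻¹ ↔ MulOpposite.op a • s = s := by
  rw [← inv_inj, inv_smul_set_distrib, inv_inv, MulOpposite.op_inv,
    ← MulAction.mem_stabilizer_iff, inv_mem_iff, MulAction.mem_stabilizer_iff]

theorem op_smul_set_eq_self_of_mul_eq {s : Set G} {H : Subgroup G} (hsH : s * H = s) {a : G}
    (ha : a ∈ H) : MulOpposite.op a • s = s := by
  have hsub : ∀ b ∈ H, MulOpposite.op b • s ⊆ s := fun b hb =>
    (op_smul_set_subset_mul hb).trans hsH.subset
  refine (hsub a ha).antisymm ?_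
  rw [subset_smul_set_iff, ← MulOpposite.op_inv]
  exact hsub a⁻¹ (inv_mem ha)

end Set

theorem reflex_of_reflex_general
    (K L : IntermediateField ℚ ℂ)
    (hKL : K ≤ L) [IsGalois ℚ L]
    (H : Set (L ≃ₐ[ℚ] L)) (hH : H = {γ | ∀ x : L, (x : ℂ) ∈ K → γ x = x})
    (S : Set (L ≃ₐ[ℚ] L)) (hSH : S * H = S)
    (H' : Set (L ≃ₐ[ℚ] L)) (hH' : H' = {γ | (fun s => s * γ) '' S = S}) :
    {γ : L ≃ₐ[ℚ] L | (fun s => γ * s) '' S⁻¹ = S⁻¹} = H' ∧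
    H ⊆ H' ∧
    (∀ x : L, (∀ γ : L ≃ₐ[ℚ] L, γ ∈ H' → γ x = x) → (x : ℂ) ∈ K) ∧
    (H' = H →
      {γ : L ≃ₐ[ℚ] L | (fun s => γ * s) '' S⁻¹ = S⁻¹} = H ∧
      {x : L | ∀ γ : L ≃ₐ[ℚ] L, (fun s => γ * s) '' S⁻¹ = S⁻¹ → γ x = x} =
        {x : L | (x : ℂ) ∈ K} ∧
      (S⁻¹)⁻¹ = S) := by
  -- The ascription puts `K'` over the `ℚ`-algebra structure of `L` used in the statement
  -- (`DivisionRing.toRatAlgebra`), not the one `restrict` is stated for.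
  set K' : IntermediateField ℚ L := IntermediateField.restrict hKL
  have hmemK' : ∀ x : L, x ∈ K' ↔ (x : ℂ) ∈ K := IntermediateField.mem_restrict hKL
  have hK : ∀ x : L, (x : ℂ) ∈ K ↔ ∀ γ ∈ K'.fixingSubgroup, γ x = x := fun x => by
    rw [← hmemK', ← IntermediateField.mem_fixedField_iff,
      InfiniteGalois.fixedField_fixingSubgroup]
  have hHK : H = K'.fixingSubgroup := by
    ext γ
    simp only [hH, SetLike.mem_coe, IntermediateField.mem_fixingSubgroup_iff, hmemK']
    rfl
  have hstab : {γ : L ≃ₐ[ℚ] L | (fun s => γ * s) '' S⁻¹ = S⁻¹} = H' := by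
    ext γ
    rw [hH']
    exact Set.smul_set_inv_eq_self_iff S γ
  have hHH' : H ⊆ H' := by
    rw [hH', hHK]
    exact fun γ hγ => Set.op_smul_set_eq_self_of_mul_eq (hHK ▸ hSH) hγ
  have hfixed : ∀ x : L, (∀ γ ∈ H', γ x = x) → (x : ℂ) ∈ K := fun x hx =>
    (hK x).2 fun γ hγ => hx γ (hHH' (hHK ▸ hγ))
  refine ⟨hstab, hHH', hfixed, fun hprim => ⟨hstab.trans hprim, ?_, inv_inv S⟩⟩
  have hstabH : ∀ γ, (fun s => γ * s) '' S⁻¹ = S⁻¹ ↔ γ ∈ K'.fixingSubgroup := fun γ =>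
    Set.ext_iff.1 ((hstab.trans hprim).trans hHK) γ
  ext x
  exact (forall_congr' fun γ => imp_congr_left (hstabH γ)).trans (hK x).symm

/-- In the reflex-field setting with `Ŝ = S⁻¹`, the stabilizer
`{γ : γŜ = Ŝ}` equals the right stabilizer `H' = {γ : Sγ = S}`, which contains `H`;
hence the reflex field of the reflex pair is `L^{H'} ⊆ K`.  If moreover the CM-type is
primitive (`H' = H`), then the reflex of the reflex is `(K, Φ)` itself: the stabilizer
of `Ŝ` is `H`, its fixed field is `K`, and `(Ŝ)⁻¹ = S`. -/
theorem reflex_of_reflex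
    (K L : IntermediateField ℚ ℂ) [NumberField K] (g : ℕ)
    (hdeg : Module.finrank ℚ K = 2 * g)
    (hCM : IsCMField K)
    (hKL : K ≤ L) [IsGalois ℚ L]
    (hmin : ∀ M : IntermediateField ℚ ℂ, K ≤ M → IsGalois ℚ M → L ≤ M)
    (c : L ≃ₐ[ℚ] L) (hc : ∀ x : L, (c x : ℂ) = starRingEnd ℂ (x : ℂ))
    (H : Set (L ≃ₐ[ℚ] L)) (hH : H = {γ | ∀ x : L, (x : ℂ) ∈ K → γ x = x})
    (S : Set (L ≃ₐ[ℚ] L)) (hSH : S * H = S)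
    (hcover : ∀ γ : L ≃ₐ[ℚ] L, γ ∈ S ∨ γ ∈ (fun s => c * s) '' S)
    (hdisj : Disjoint S ((fun s => c * s) '' S))
    (H' : Set (L ≃ₐ[ℚ] L)) (hH' : H' = {γ | (fun s => s * γ) '' S = S}) :
    {γ : L ≃ₐ[ℚ] L | (fun s => γ * s) '' S⁻¹ = S⁻¹} = H' ∧
    H ⊆ H' ∧
    (∀ x : L, (∀ γ : L ≃ₐ[ℚ] L, γ ∈ H' → γ x = x) → (x : ℂ) ∈ K) ∧
    (H' = H →
      {γ : L ≃ₐ[ℚ] L | (fun s => γ * s) '' S⁻¹ = S⁻¹} = H ∧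
      {x : L | ∀ γ : L ≃ₐ[ℚ] L, (fun s => γ * s) '' S⁻¹ = S⁻¹ → γ x = x} =
        {x : L | (x : ℂ) ∈ K} ∧
      (S⁻¹)⁻¹ = S) :=
  reflex_of_reflex_general K L hKL H hH S hSH H' hH'
end
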